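/- Let T be a consistent c.e. extension of PA whose height exceeds cx(A) for a given modal formula A, and suppose that for every Σ1 sentence σ there exists an arithmetical interpretation f such that PA ⊢ σ → f_T(□A) and PA + Con_T^{cx(A)+1} ⊢ f_T(□A) → σ. Then A is nontrifling, i.e., GL_ω does not prove □□A → □A. -/

import Mathlib

/-- An abstract setting for the arithmetic of provability: a type of sentences
of the language of arithmetic with falsity and implication, a provability
predicate `pr` (the sentence `Pr_T(⌜·⌝)`), provability in PA and in the fixed
consistent c.e. extension `T` of PA, the class of Σ₁ sentences, and truth in
the standard model ℕ. -/
structure PASetup where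
  Sent : Type
  fal : Sent
  imp : Sent → Sent → Sent
  pr : Sent → Sent
  PAPrv : Sent → Prop
  TPrv : Sent → Prop
  Sigma1 : Sent → Prop
  TrueN : Sent → Prop

namespace PASetup

def neg (S : PASetup) (A : S.Sent) : S.Sent := S.imp A S.fal
def conj (S : PASetup) (A B : S.Sent) : S.Sent := S.neg (S.imp A (S.neg B))
def disj (S : PASetup) (A B : S.Sent) : S.Sent := S.imp (S.neg A) B
def biimp (S : PASetup) (A B : S.Sent) : S.Sent := S.conj (S.imp A B) (S.imp B A)
/-- `Con_T := ¬Pr_T(⌜0=1⌝)`. -/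
def con (S : PASetup) : S.Sent := S.neg (S.pr S.fal)
/-- Provability in `PA + Con_T` (via the deduction theorem). -/
def PAConPrv (S : PASetup) (A : S.Sent) : Prop := S.PAPrv (S.imp S.con A)

/-- Iterated consistency statements: `Con_T^0 := (0=0)`,
`Con_T^{n+1} := ¬Pr_T(⌜¬Con_T^n⌝)`. -/
def conIter (S : PASetup) : ℕ → S.Sent
  | 0 => S.neg S.fal
  | n+1 => S.neg (S.pr (S.neg (conIter S n)))

/-- `A` is an instance of a propositional tautology. -/
def TautInst (S : PASetup) (A : S.Sent) : Prop :=
  ∀ v : S.Sent → Bool, (∀ B C, v (S.imp B C) = (!(v B) || v C)) →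
    v S.fal = false → v A = true

/-- The standard facts assumed about `PA`, `T`, and the natural Σ₁ provability
predicate `Pr_T` (closure under propositional logic, consistency of `T`, the
Hilbert–Bernays–Löb derivability conditions, provable Σ₁-completeness, Löb's
theorem, soundness of PA, and the semantics of truth in ℕ). -/
structure Facts (S : PASetup) : Prop where
  pa_taut : ∀ A, S.TautInst A → S.PAPrv A
  pa_mp : ∀ A B, S.PAPrv (S.imp A B) → S.PAPrv A → S.PAPrv B
  pa_t : ∀ A, S.PAPrv A → S.TPrv A
  t_taut : ∀ A, S.TautInst A → S.TPrv A
  t_mp : ∀ A B, S.TPrv (S.imp A B) → S.TPrv A → S.TPrv B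
  t_con : ¬ S.TPrv S.fal
  d1 : ∀ A, S.TPrv A → S.PAPrv (S.pr A)
  d2 : ∀ A B, S.PAPrv (S.imp (S.pr (S.imp A B)) (S.imp (S.pr A) (S.pr B)))
  d3 : ∀ A, S.Sigma1 A → S.PAPrv (S.imp A (S.pr A))
  sigma1_pr : ∀ A, S.Sigma1 (S.pr A)
  sigma1_fal : S.Sigma1 S.fal
  sigma1_top : S.Sigma1 (S.neg S.fal)
  prv_of_incon : ∀ A, S.PAPrv (S.imp (S.neg S.con) (S.pr A))
  lob : ∀ A, S.TPrv (S.imp (S.pr A) A) → S.TPrv A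
  pa_sound : ∀ A, S.PAPrv A → S.TrueN A
  true_imp : ∀ A B, S.TrueN (S.imp A B) ↔ (S.TrueN A → S.TrueN B)
  true_fal : ¬ S.TrueN S.fal
  true_pr : ∀ A, S.TrueN (S.pr A) ↔ S.TPrv A

end PASetup

/-- Modal propositional formulas (variables are indexed by `ℕ`). -/
inductive MF : Type
  | var : ℕ → MF
  | fal : MF
  | imp : MF → MF → MF
  | box : MF → MF
deriving DecidableEq

namespace MF

def neg (A : MF) : MF := imp A fal
def top : MF := neg fal
def conj (A B : MF) : MF := neg (imp A (neg B))
def disj (A B : MF) : MF := imp (neg A) B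
def biimp (A B : MF) : MF := conj (imp A B) (imp B A)
def dia (A : MF) : MF := neg (box (neg A))
def boxn : ℕ → MF → MF
  | 0, A => A
  | n+1, A => box (boxn n A)
def dian (n : ℕ) (A : MF) : MF := neg (boxn n (neg A))

/-- Uniform substitution. -/
def subst (s : ℕ → MF) : MF → MF
  | var n => s n
  | fal => fal
  | imp A B => imp (subst s A) (subst s B)
  | box A => box (subst s A)

/-- The set of subformulas. -/
def subF : MF → Finset MF
  | var n => {var n}
  | fal => {fal}
  | imp A B => insert (imp A B) (subF A ∪ subF B)
  | box A => insert (box A) (subF A)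

def isBox : MF → Bool
  | box _ => true
  | _ => false

def unbox : MF → MF
  | box A => A
  | A => A

/-- `cx A` is the number of subformulas of `A` of the form `□C`. -/
def cx (A : MF) : ℕ := ((subF A).filter (fun B => isBox B = true)).card

/-- `Rf(A) = {□B → B : □B ∈ Sub(A)}`. -/
def RfSet (A : MF) : Finset MF :=
  ((subF A).filter (fun B => isBox B = true)).image (fun B => imp B (unbox B))

/-- Conjunction of a finite set of formulas. -/
noncomputable def conjFin (s : Finset MF) : MF := s.toList.foldr conj top

/-- `A` is an instance of a propositional tautology. -/
def TautInst (A : MF) : Prop :=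
  ∀ v : MF → Bool, (∀ B C, v (imp B C) = (!(v B) || v C)) → v fal = false → v A = true

end MF

/-- Provability in the Gödel–Löb logic GL. -/
inductive GLPrv : MF → Prop
  | taut {A} : MF.TautInst A → GLPrv A
  | k (A B : MF) : GLPrv (MF.imp (MF.box (MF.imp A B)) (MF.imp (MF.box A) (MF.box B)))
  | lob (A : MF) : GLPrv (MF.imp (MF.box (MF.imp (MF.box A) A)) (MF.box A))
  | mp {A B} : GLPrv (MF.imp A B) → GLPrv A → GLPrv B
  | nec {A} : GLPrv A → GLPrv (MF.box A)

/-- Provability in GL + Γ: axioms are GL-theorems and substitution instances of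
formulas in Γ; rules are modus ponens (and substitution, built into the axiom rule). -/
inductive ExtPrv (Ax : Set MF) : MF → Prop
  | gl {A} : GLPrv A → ExtPrv Ax A
  | ax {A} (s : ℕ → MF) : A ∈ Ax → ExtPrv Ax (A.subst s)
  | mp {A B} : ExtPrv Ax (MF.imp A B) → ExtPrv Ax A → ExtPrv Ax B

/-- GL_ω = GL + {◇ⁿ⊤ : n ∈ ω}. -/
def GLomegaPrv : MF → Prop := ExtPrv (Set.range fun n => MF.dian n MF.top)

/-- GLS = GL + {□p → p}. -/
def GLSPrv : MF → Prop := ExtPrv {MF.imp (MF.box (MF.var 0)) (MF.var 0)}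

/-- F_s = □^{s+1}⊥ → □^s⊥. -/
def Fmla (s : ℕ) : MF := MF.imp (MF.boxn (s+1) MF.fal) (MF.boxn s MF.fal)

/-- GL + {¬F_s}. -/
def GLFPrv (s : ℕ) : MF → Prop := ExtPrv {MF.neg (Fmla s)}

/-- The arithmetical interpretation `f_T` determined by an assignment `g` of
arithmetic sentences to propositional variables: commutes with the
connectives and sends `□B` to `Pr_T(⌜f_T(B)⌝)`. -/
def PASetup.minterp (S : PASetup) (g : ℕ → S.Sent) : MF → S.Sent
  | MF.var n => g n
  | MF.fal => S.fal
  | MF.imp A B => S.imp (S.minterp g A) (S.minterp g B)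
  | MF.box A => S.pr (S.minterp g A)

/-!
If GL_ω ⊢ □□A → □A, then GL ⊢ ◇ᵐ⊤ → (□□A → □A) for some `m`. Flexibility refutes both
GL ⊢ A (take σ := Pr_T(⌜⊥⌝)) and GL ⊢ ◇ᶜ⁺¹⊤ → ¬□A with `c = cx A` (take σ := ⊤), because the height
of `T` makes `Con_T^{c+1}` true in ℕ. Kripke completeness of GL then yields a world refuting `A`
under `□A`, and a world forcing `□A` from which a chain of `c + 2` worlds starts. Only `c + 1`
boxed subformulas of `□A` can become true along that chain, so some world on it forces `D` whenever
it forces a boxed subformula `□D`; cloning that world into an arbitrarily long chain preserves the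
subformulas of `□A`. A new root below the two worlds then forces ◇ᵐ⊤, □□A and ¬□A.
-/

section TruthAssignment
variable {α : Type*} (imp : α → α → α) (fal : α)

def IsTruthAssignment (v : α → Prop) : Prop :=
  (∀ A B, v (imp A B) ↔ (v A → v B)) ∧ ¬ v fal

/-- The `taut` field is `MF.TautInst` and `PASetup.TautInst` unfolded, so that GL and PA are both
instances. -/
structure IsClassical (P : α → Prop) : Prop where
  taut : ∀ A, (∀ v : α → Bool, (∀ B C, v (imp B C) = (!(v B) || v C)) → v fal = false →
    v A = true) → P A
  mp : ∀ {A B}, P (imp A B) → P A → P B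

variable {imp fal} {P : α → Prop}

theorem IsClassical.of_taut (hP : IsClassical imp fal P) {A : α}
    (h : ∀ v, IsTruthAssignment imp fal v → v A) : P A := by
  refine hP.taut A fun v himp hfal => h (v · = true) ⟨fun B C => ?_, by simp [hfal]⟩
  simp only [himp]
  cases v B <;> simp

end TruthAssignment

theorem GLPrv.isClassical : IsClassical MF.imp MF.fal GLPrv :=
  ⟨fun _ h => GLPrv.taut h, GLPrv.mp⟩

theorem PASetup.Facts.isClassical {S : PASetup} (hS : S.Facts) :
    IsClassical S.imp S.fal S.PAPrv :=
  ⟨hS.pa_taut, hS.pa_mp _ _⟩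

namespace MF

theorem holds_foldr_conj {v : MF → Prop} (hv : IsTruthAssignment imp fal v) :
    ∀ L : List MF, v (L.foldr conj top) ↔ ∀ X ∈ L, v X
  | [] => by simp [top, neg, hv.1]
  | X :: L => by
    simp only [List.foldr_cons, conj, neg, hv.1, hv.2, holds_foldr_conj hv L,
      List.forall_mem_cons]
    tauto

theorem holds_conjFin {v : MF → Prop} (hv : IsTruthAssignment imp fal v) (Γ : Finset MF) :
    v (conjFin Γ) ↔ ∀ X ∈ Γ, v X := by
  simp [conjFin, holds_foldr_conj hv]

end MF

open MF

namespace GLPrv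

theorem imp_trans {X Y Z : MF} (h1 : GLPrv (imp X Y)) (h2 : GLPrv (imp Y Z)) :
    GLPrv (imp X Z) :=
  mp (mp (isClassical.of_taut fun v hv => by simp only [hv.1]; tauto) h1) h2

theorem box_mono {X Y : MF} (h : GLPrv (imp X Y)) : GLPrv (imp (box X) (box Y)) :=
  mp (k X Y) (nec h)

theorem of_box_imp {X : MF} (h : GLPrv (imp (box X) X)) : GLPrv X :=
  mp h (mp (lob X) (nec h))

/-- Löb's axiom for `X ∧ □X`. -/
theorem box_imp_box_box (X : MF) : GLPrv (imp (box X) (box (box X))) := by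
  have hE : GLPrv (imp (box (conj X (box X))) (box X)) :=
    box_mono (isClassical.of_taut fun v hv => by simp only [conj, neg, hv.1, hv.2]; tauto)
  have hlob : GLPrv (imp X (imp (box (conj X (box X))) (conj X (box X)))) :=
    mp (isClassical.of_taut fun v hv => by simp only [conj, neg, hv.1, hv.2]; tauto) hE
  exact imp_trans (imp_trans (box_mono hlob) (lob _))
    (box_mono (isClassical.of_taut fun v hv => by simp only [conj, neg, hv.1, hv.2]; tauto))

end GLPrv

namespace MF

def Derives (Γ : Finset MF) (Y : MF) : Prop := GLPrv (imp (conjFin Γ) Y)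

def Consistent (Γ : Finset MF) : Prop := ¬ Derives Γ fal

variable {Γ Δ : Finset MF} {X Y : MF}

theorem derives_of_glPrv (h : GLPrv Y) : Derives Γ Y :=
  GLPrv.mp (GLPrv.isClassical.of_taut fun v hv => by simp only [hv.1]; tauto) h

theorem derives_of_taut (h : ∀ v, IsTruthAssignment imp fal v → v Y) : Derives Γ Y :=
  derives_of_glPrv (GLPrv.isClassical.of_taut h)

theorem Derives.mp (h1 : Derives Γ (imp X Y)) (h2 : Derives Γ X) : Derives Γ Y :=
  GLPrv.mp (GLPrv.mp (GLPrv.isClassical.of_taut fun v hv => by simp only [hv.1]; tauto) h1) h2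

theorem derives_empty_iff : Derives ∅ Y ↔ GLPrv Y :=
  ⟨fun h => GLPrv.mp h (GLPrv.isClassical.of_taut fun v hv => by simp [holds_conjFin hv]),
    derives_of_glPrv⟩

theorem derives_insert_iff : Derives (insert X Γ) Y ↔ Derives Γ (imp X Y) := by
  constructor <;> refine fun h => GLPrv.mp (GLPrv.isClassical.of_taut fun v hv => ?_) h <;>
    simp only [hv.1, holds_conjFin hv, Finset.forall_mem_insert] <;> tauto

theorem derives_of_mem (h : X ∈ Γ) : Derives Γ X :=
  GLPrv.isClassical.of_taut fun v hv => by
    simp only [hv.1, holds_conjFin hv]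
    exact fun hΓ => hΓ X h

theorem Derives.trans (hΔ : ∀ X ∈ Δ, Derives Γ X) (h : Derives Δ Y) : Derives Γ Y := by
  induction Δ using Finset.induction_on generalizing Y with
  | empty => exact derives_of_glPrv (derives_empty_iff.1 h)
  | insert X Δ _ ih =>
    rw [Finset.forall_mem_insert] at hΔ
    exact (ih hΔ.2 (derives_insert_iff.1 h)).mp hΔ.1

theorem Derives.mono (hΓ : Γ ⊆ Δ) (h : Derives Γ Y) : Derives Δ Y :=
  h.trans fun _ hX => derives_of_mem (hΓ hX)

theorem Derives.box (h : Derives Γ Y) : Derives (Γ.image box) (box Y) := by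
  induction Γ using Finset.induction_on generalizing Y with
  | empty => exact derives_of_glPrv (GLPrv.nec (derives_empty_iff.1 h))
  | insert X Γ _ ih =>
    rw [Finset.image_insert, derives_insert_iff]
    exact (derives_of_glPrv (GLPrv.k X Y)).mp (ih (derives_insert_iff.1 h))

theorem Consistent.mono (hΓ : Γ ⊆ Δ) (h : Consistent Δ) : Consistent Γ :=
  fun hΓ' => h (hΓ'.mono hΓ)

theorem Consistent.insert_or_insert_neg (h : Consistent Γ) (X : MF) :
    Consistent (insert X Γ) ∨ Consistent (insert (neg X) Γ) := by
  by_contra! hX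
  simp only [Consistent, not_not, derives_insert_iff] at hX
  exact h (hX.2.mp hX.1)

theorem mem_subF_self (A : MF) : A ∈ A.subF := by
  cases A <;> simp [subF]

theorem subF_subset_of_mem {A B : MF} (h : B ∈ A.subF) : B.subF ⊆ A.subF := by
  induction A with
  | var | fal => simp only [subF, Finset.mem_singleton] at h; rw [h]
  | imp X Y ihX ihY =>
    simp only [subF, Finset.mem_insert, Finset.mem_union] at h
    rcases h with rfl | h | h
    · rfl
    · exact (ihX h).trans fun _ h => by simp [subF, h]
    · exact (ihY h).trans fun _ h => by simp [subF, h]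
  | box X ihX =>
    simp only [subF, Finset.mem_insert] at h
    rcases h with rfl | h
    · rfl
    · exact (ihX h).trans fun _ h => by simp [subF, h]

theorem mem_subF_of_imp_left {A B C : MF} (h : imp B C ∈ A.subF) : B ∈ A.subF :=
  subF_subset_of_mem h (by simp [subF, mem_subF_self])

theorem mem_subF_of_imp_right {A B C : MF} (h : imp B C ∈ A.subF) : C ∈ A.subF :=
  subF_subset_of_mem h (by simp [subF, mem_subF_self])

theorem mem_subF_of_box {A B : MF} (h : box B ∈ A.subF) : B ∈ A.subF :=
  subF_subset_of_mem h (by simp [subF, mem_subF_self])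

theorem sizeOf_le_of_mem_subF {A B : MF} (h : B ∈ A.subF) : sizeOf B ≤ sizeOf A := by
  induction A with
  | var | fal => simp only [subF, Finset.mem_singleton] at h; rw [h]
  | imp X Y ihX ihY =>
    simp only [subF, Finset.mem_insert, Finset.mem_union] at h
    rcases h with rfl | h | h
    · rfl
    · simp only [imp.sizeOf_spec]; have := ihX h; omega
    · simp only [imp.sizeOf_spec]; have := ihY h; omega
  | box X ihX =>
    simp only [subF, Finset.mem_insert] at h
    rcases h with rfl | h
    · rfl
    · simp only [box.sizeOf_spec]; have := ihX h; omega

theorem box_notMem_subF (A : MF) : box A ∉ A.subF := fun h => by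
  have := sizeOf_le_of_mem_subF h
  simp only [box.sizeOf_spec] at this
  omega

theorem cx_box (A : MF) : (box A).cx = A.cx + 1 := by
  rw [cx, subF, Finset.filter_insert, if_pos (by rfl), Finset.card_insert_of_notMem, cx]
  exact fun h => box_notMem_subF A (Finset.mem_filter.1 h).1

theorem subst_boxn (s : ℕ → MF) (A : MF) : ∀ n, (boxn n A).subst s = boxn n (A.subst s)
  | 0 => rfl
  | n + 1 => congrArg box (subst_boxn s A n)

theorem subst_dian_top (s : ℕ → MF) (n : ℕ) : (dian n top).subst s = dian n top :=
  congrArg (imp · fal) (subst_boxn s _ n)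

end MF

structure GLModel where
  W : Type
  R : W → W → Prop
  V : ℕ → W → Prop
  finite : Finite W
  trans : ∀ {x y z}, R x y → R y z → R x z
  irrefl : ∀ x, ¬ R x x

attribute [instance] GLModel.finite

namespace GLModel

variable (M : GLModel)

def Forces : MF → M.W → Prop
  | .var n, w => M.V n w
  | .fal, _ => False
  | .imp B C, w => Forces B w → Forces C w
  | .box B, w => ∀ u, M.R w u → Forces B u

theorem wellFounded_flip : WellFounded (flip M.R) :=
  haveI : IsTrans M.W (flip M.R) := ⟨fun _ _ _ h1 h2 => M.trans h2 h1⟩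
  haveI : Std.Irrefl (flip M.R) := ⟨M.irrefl⟩
  Finite.wellFounded_of_trans_of_irrefl _

variable {M}

theorem forces_of_glPrv {A : MF} (h : GLPrv A) (w : M.W) : M.Forces A w := by
  induction h generalizing w with
  | taut h =>
    classical
    simpa using h (fun C => decide (M.Forces C w))
      (fun B C => by by_cases M.Forces B w <;> by_cases M.Forces C w <;> simp_all [Forces])
      (decide_eq_false id)
  | k A B => exact fun h1 h2 u hu => h1 u hu (h2 u hu)
  | lob A =>
    intro hlob u hwu
    induction u using M.wellFounded_flip.induction with
    | _ u ih => exact hlob u hwu fun z huz => ih z huz (M.trans hwu huz)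
  | mp _ _ ih1 ih2 => exact ih1 w (ih2 w)
  | nec _ ih => exact fun u _ => ih u

theorem Forces.box_of_rel {X : MF} {w u : M.W} (h : M.Forces (box X) w) (hwu : M.R w u) :
    M.Forces (box X) u :=
  fun z huz => h z (M.trans hwu huz)

theorem forces_dian_zero (w : M.W) : M.Forces (dian 0 top) w :=
  fun h => h id

theorem forces_dian_succ {n : ℕ} {w : M.W} :
    M.Forces (dian (n + 1) top) w ↔ ∃ u, M.R w u ∧ M.Forces (dian n top) u := by
  simp only [dian, MF.neg, boxn, Forces, imp_false, not_forall, exists_prop]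

theorem Forces.dian_of_le {k n : ℕ} {w : M.W} (h : M.Forces (dian n top) w)
    (hkn : k ≤ n) : M.Forces (dian k top) w := by
  induction n generalizing k w with
  | zero => rwa [Nat.le_zero.1 hkn]
  | succ n ih =>
    obtain _ | k := k
    · exact forces_dian_zero w
    obtain ⟨u, hwu, hu⟩ := forces_dian_succ.1 h
    exact forces_dian_succ.2 ⟨u, hwu, ih hu (Nat.le_of_succ_le_succ hkn)⟩

def IsReflexiveFor (ψ : MF) (x : M.W) : Prop :=
  ∀ D, box D ∈ ψ.subF → M.Forces (box D) x → M.Forces D x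

/-- A bounded morphism preserves forcing; the forth condition may fail between points with
the same image, provided that image is reflexive for the formulas considered. -/
theorem forces_apply_iff {N : GLModel} (f : M.W → N.W) (ψ : MF)
    (hV : ∀ n x, N.V n (f x) ↔ M.V n x)
    (hback : ∀ x z, N.R (f x) z → ∃ y, M.R x y ∧ f y = z)
    (hforth : ∀ x y, M.R x y → N.R (f x) (f y) ∨ (f y = f x ∧ N.IsReflexiveFor ψ (f x))) :
    ∀ C ∈ ψ.subF, ∀ x, N.Forces C (f x) ↔ M.Forces C x := by
  intro C hC
  induction C with
  | var n => exact hV n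
  | fal => exact fun _ => Iff.rfl
  | imp B D ihB ihD =>
    intro x
    exact imp_congr (ihB (mem_subF_of_imp_left hC) x) (ihD (mem_subF_of_imp_right hC) x)
  | box D ihD =>
    have ih := ihD (mem_subF_of_box hC)
    intro x
    constructor
    · intro h y hxy
      refine (ih y).1 ?_
      rcases hforth x y hxy with hR | ⟨hfy, hrefl⟩
      · exact h _ hR
      · exact hfy ▸ hrefl D hC h
    · intro h z hz
      obtain ⟨y, hxy, rfl⟩ := hback x z hz
      exact (ih y).2 (h y hxy)

end GLModel

namespace MF

def literal (s : Finset MF) (C : MF) : MF := if C ∈ s then C else neg C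

def diagram (L s : Finset MF) : Finset MF := L.image (literal s)

variable {Δ L s : Finset MF} {C : MF}

theorem literal_of_mem (h : C ∈ s) : literal s C = C := if_pos h

theorem literal_of_notMem (h : C ∉ s) : literal s C = neg C := if_neg h

theorem derives_diagram_of_mem (hL : C ∈ L) (hs : C ∈ s) : Derives (diagram L s) C :=
  literal_of_mem hs ▸ derives_of_mem (Finset.mem_image_of_mem _ hL)

theorem derives_diagram_neg_of_notMem (hL : C ∈ L) (hs : C ∉ s) :
    Derives (diagram L s) (neg C) :=
  literal_of_notMem hs ▸ derives_of_mem (Finset.mem_image_of_mem _ hL)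

theorem Consistent.exists_union_diagram (hΔ : Consistent Δ) (L : Finset MF) :
    ∃ s ⊆ L, Consistent (Δ ∪ diagram L s) := by
  induction L using Finset.induction_on with
  | empty => exact ⟨∅, subset_rfl, by simpa [diagram] using hΔ⟩
  | insert C L hCL ih =>
    obtain ⟨s, hsL, hs⟩ := ih
    rcases hs.insert_or_insert_neg C with h | h
    · refine ⟨insert C s, Finset.insert_subset_insert C hsL, ?_⟩
      have hL : diagram L (insert C s) = diagram L s := Finset.image_congr fun D hD => by
        have : D ≠ C := fun h => hCL (h ▸ hD)
        simp [literal, this]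
      rwa [diagram, Finset.image_insert, ← diagram, hL,
        literal_of_mem (Finset.mem_insert_self C s), Finset.union_insert]
    · refine ⟨s, hsL.trans (Finset.subset_insert C L), ?_⟩
      rwa [diagram, Finset.image_insert, ← diagram, literal_of_notMem fun h => hCL (hsL h),
        Finset.union_insert]

theorem mem_of_derives (hs : Consistent (Δ ∪ diagram L s)) (hC : C ∈ L) (h : Derives Δ C) :
    C ∈ s := by
  by_contra hCs
  exact hs (((derives_diagram_neg_of_notMem hC hCs).mono Finset.subset_union_right).mp
    (h.mono Finset.subset_union_left))

theorem notMem_of_derives_neg (hs : Consistent (Δ ∪ diagram L s)) (hC : C ∈ L)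
    (h : Derives Δ (neg C)) : C ∉ s := fun hCs =>
  hs ((h.mono Finset.subset_union_left).mp
    ((derives_diagram_of_mem hC hCs).mono Finset.subset_union_right))

end MF

namespace GLModel

/-- A world is the set of subformulas of `ψ` it makes true. -/
def canonical (ψ : MF) : GLModel where
  W := {s : Finset MF // s ⊆ ψ.subF ∧ Consistent (diagram ψ.subF s)}
  R s u := (∀ D, box D ∈ s.1 → box D ∈ u.1 ∧ D ∈ u.1) ∧ ∃ D, box D ∈ u.1 ∧ box D ∉ s.1
  V n s := var n ∈ s.1
  finite := Finite.of_injective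
    (fun s => (⟨s.1, Finset.mem_powerset.2 s.2.1⟩ : ψ.subF.powerset)) fun _ _ h =>
      Subtype.ext (congrArg (fun x : ψ.subF.powerset => x.1) h)
  trans := fun ⟨h1, _⟩ ⟨h2, D, hD, hDy⟩ =>
    ⟨fun E hE => h2 E (h1 E hE).1, D, hD, fun hDx => hDy (h1 D hDx).1⟩
  irrefl := fun _ ⟨_, _, hD, hD'⟩ => hD' hD

variable {ψ B C Y : MF} (w : (canonical ψ).W)

theorem canonical_derives_of_mem (h : C ∈ w.1) : Derives (diagram ψ.subF w.1) C :=
  derives_diagram_of_mem (w.2.1 h) h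

theorem canonical_mem_of_derives (hC : C ∈ ψ.subF) (h : Derives (diagram ψ.subF w.1) C) :
    C ∈ w.1 :=
  mem_of_derives (by rw [Finset.union_self]; exact w.2.2) hC h

theorem canonical_fal_notMem : fal ∉ w.1 := fun h =>
  w.2.2 (canonical_derives_of_mem w h)

theorem canonical_imp_mem_iff (h : imp B C ∈ ψ.subF) :
    imp B C ∈ w.1 ↔ (B ∈ w.1 → C ∈ w.1) := by
  constructor
  · intro hBC hBw
    exact canonical_mem_of_derives w (mem_subF_of_imp_right h)
      ((canonical_derives_of_mem w hBC).mp (canonical_derives_of_mem w hBw))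
  · intro hBC
    refine canonical_mem_of_derives w h ?_
    by_cases hBw : B ∈ w.1
    · exact (derives_of_taut fun v hv => by simp only [hv.1]; tauto).mp
        (canonical_derives_of_mem w (hBC hBw))
    · exact (derives_of_taut fun v hv => by simp only [neg, hv.1, hv.2]; tauto).mp
        (derives_diagram_neg_of_notMem (mem_subF_of_imp_left h) hBw)

/-- Axiom 4 turns `Γ ∪ □Γ ⊢ Y` into `□Γ ⊢ □Y`. -/
theorem canonical_derives_box {Γ : Finset MF} (hΓ : ∀ D ∈ Γ, box D ∈ w.1)
    (h : Derives (Γ ∪ Γ.image box) Y) : Derives (diagram ψ.subF w.1) (box Y) := by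
  refine Derives.trans ?_ h.box
  simp only [Finset.mem_image, Finset.mem_union]
  rintro _ ⟨D, hD | ⟨D, hD, rfl⟩, rfl⟩
  · exact canonical_derives_of_mem w (hΓ D hD)
  · exact (derives_of_glPrv (GLPrv.box_imp_box_box D)).mp (canonical_derives_of_mem w (hΓ D hD))

theorem canonical_exists_rel (hC : box C ∈ ψ.subF) (hw : box C ∉ w.1) :
    ∃ u, (canonical ψ).R w u ∧ C ∉ u.1 := by
  set Γ := ψ.subF.filter (fun D => box D ∈ w.1)
  set Δ := insert (neg C) (insert (box C) (Γ ∪ Γ.image box))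
  have hΔ : Consistent Δ := by
    intro hfal
    rw [derives_insert_iff, derives_insert_iff] at hfal
    have hreflect : Derives (Γ ∪ Γ.image box) (imp (box C) C) :=
      (derives_of_taut fun v hv => by simp only [neg, hv.1, hv.2]; tauto).mp hfal
    have hboxC : Derives (diagram ψ.subF w.1) (box C) := (derives_of_glPrv (GLPrv.lob C)).mp
      (canonical_derives_box w (fun D hD => (Finset.mem_filter.1 hD).2) hreflect)
    exact w.2.2 ((derives_diagram_neg_of_notMem hC hw).mp hboxC)
  obtain ⟨s, hsψ, hs⟩ := hΔ.exists_union_diagram ψ.subF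
  refine ⟨⟨s, hsψ, hs.mono Finset.subset_union_right⟩, ⟨fun D hD => ?_, C, ?_, hw⟩, ?_⟩
  · have hDΓ : D ∈ Γ := Finset.mem_filter.2 ⟨mem_subF_of_box (w.2.1 hD), hD⟩
    exact ⟨mem_of_derives hs (w.2.1 hD) (derives_of_mem (by simp [Δ, hDΓ])),
      mem_of_derives hs (mem_subF_of_box (w.2.1 hD)) (derives_of_mem (by simp [Δ, hDΓ]))⟩
  · exact mem_of_derives hs hC (derives_of_mem (by simp [Δ]))
  · exact notMem_of_derives_neg hs (mem_subF_of_box hC) (derives_of_mem (by simp [Δ]))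

theorem canonical_forces_iff : ∀ C ∈ ψ.subF, ∀ w : (canonical ψ).W,
    (canonical ψ).Forces C w ↔ C ∈ w.1 := by
  intro C hC
  induction C with
  | var n => exact fun _ => Iff.rfl
  | fal => exact fun w => ⟨False.elim, canonical_fal_notMem w⟩
  | imp B D ihB ihD =>
    intro w
    rw [canonical_imp_mem_iff w hC]
    exact imp_congr (ihB (mem_subF_of_imp_left hC) w) (ihD (mem_subF_of_imp_right hC) w)
  | box D ih =>
    have ih := ih (mem_subF_of_box hC)
    refine fun w => ⟨fun h => ?_, fun h u hwu => (ih u).2 (hwu.1 D h).2⟩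
    by_contra hw
    obtain ⟨u, hwu, hu⟩ := canonical_exists_rel w hC hw
    exact hu ((ih u).1 (h u hwu))

theorem exists_not_forces {ψ : MF} (h : ¬ GLPrv ψ) :
    ∃ (M : GLModel) (w : M.W), ¬ M.Forces ψ w := by
  have hcons : Consistent (insert (neg ψ) ∅) := fun hfal => h <|
    GLPrv.mp (GLPrv.isClassical.of_taut fun v hv => by simp only [neg, hv.1, hv.2]; tauto)
      (derives_empty_iff.1 (derives_insert_iff.1 hfal))
  obtain ⟨s, hsψ, hs⟩ := hcons.exists_union_diagram ψ.subF
  let w : (canonical ψ).W := ⟨s, hsψ, hs.mono Finset.subset_union_right⟩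
  refine ⟨canonical ψ, w, fun hw => ?_⟩
  exact notMem_of_derives_neg hs (mem_subF_self ψ) (derives_of_mem (Finset.mem_insert_self _ _))
    ((canonical_forces_iff ψ (mem_subF_self ψ) w).1 hw)

variable {M : GLModel}

/-- A chain of `N` copies of `x0`, inserted just below `x0`. -/
def cloneRel (M : GLModel) (x0 : M.W) (N : ℕ) : M.W ⊕ Fin N → M.W ⊕ Fin N → Prop
  | .inl x, .inl y => M.R x y
  | .inl x, .inr _ => M.R x x0
  | .inr j, .inr k => j < k
  | .inr _, .inl y => y = x0 ∨ M.R x0 y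

def clone (M : GLModel) (x0 : M.W) (N : ℕ) : GLModel where
  W := M.W ⊕ Fin N
  R := cloneRel M x0 N
  V n := Sum.elim (M.V n) fun _ => M.V n x0
  finite := inferInstance
  trans := by
    rintro (x | j) (y | k) (z | l) h1 h2
    · exact M.trans h1 h2
    · exact M.trans h1 h2
    · rcases h2 with rfl | h2
      · exact h1
      · exact M.trans h1 h2
    · exact h1
    · rcases h1 with rfl | h1
      · exact Or.inr h2
      · exact Or.inr (M.trans h1 h2)
    · rcases h1 with rfl | h1
      · exact absurd h2 (M.irrefl _)
      · exact absurd (M.trans h1 h2) (M.irrefl _)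
    · exact h2
    · exact lt_trans h1 h2
  irrefl := by
    rintro (x | j) h
    · exact M.irrefl x h
    · exact lt_irrefl j h

theorem clone_forces_iff {ψ : MF} {x0 : M.W} {N : ℕ} (hx0 : M.IsReflexiveFor ψ x0) :
    ∀ C ∈ ψ.subF, ∀ w, M.Forces C (Sum.elim id (fun _ => x0) w) ↔ (M.clone x0 N).Forces C w := by
  refine forces_apply_iff (M := M.clone x0 N) _ ψ (fun n w => by cases w <;> rfl) ?_ ?_
  · rintro (x | j) z hz
    · exact ⟨.inl z, hz, rfl⟩
    · exact ⟨.inl z, Or.inr hz, rfl⟩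
  · rintro (x | j) (y | k) h
    · exact Or.inl h
    · exact Or.inl h
    · rcases h with rfl | h
      · exact Or.inr ⟨rfl, hx0⟩
      · exact Or.inl h
    · exact Or.inr ⟨rfl, hx0⟩

theorem clone_forces_dian {x0 : M.W} {N : ℕ} :
    ∀ k (j : Fin N), j + k < N → (M.clone x0 N).Forces (dian k top) (.inr j)
  | 0, _, _ => forces_dian_zero _
  | k + 1, j, hj => forces_dian_succ.2
    ⟨.inr ⟨j + 1, by omega⟩, Nat.lt_succ_self j, clone_forces_dian k _ (by simp only; omega)⟩

theorem clone_forces_dian_of_rel {x x0 : M.W} {N : ℕ} (hx : M.R x x0) :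
    (M.clone x0 N).Forces (dian N top) (.inl x) := by
  obtain _ | k := N
  · exact forces_dian_zero _
  · exact forces_dian_succ.2 ⟨.inr 0, hx, clone_forces_dian k 0 (by simp)⟩

open Classical in
noncomputable def boxTheory (M : GLModel) (ψ : MF) (x : M.W) : Finset MF :=
  (ψ.subF.filter fun B => B.isBox = true).filter (M.Forces · x)

theorem mem_boxTheory {ψ D : MF} {x : M.W} :
    box D ∈ M.boxTheory ψ x ↔ box D ∈ ψ.subF ∧ M.Forces (box D) x := by
  simp only [boxTheory, Finset.mem_filter]
  exact ⟨fun h => ⟨h.1.1, h.2⟩, fun h => ⟨⟨h.1, rfl⟩, h.2⟩⟩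

theorem card_boxTheory_le (ψ : MF) (x : M.W) : (M.boxTheory ψ x).card ≤ ψ.cx := by
  classical
  exact Finset.card_le_card (Finset.filter_subset _ _)

theorem boxTheory_mono {ψ : MF} {x u : M.W} (hxu : M.R x u) :
    M.boxTheory ψ x ⊆ M.boxTheory ψ u := by
  intro B hB
  simp only [boxTheory, Finset.mem_filter] at hB ⊢
  obtain ⟨D, rfl⟩ : ∃ D, B = .box D := by cases B <;> simp_all [isBox]
  exact ⟨hB.1, hB.2.box_of_rel hxu⟩

/-- Along a chain of length `n` the boxed subformulas of `ψ` forced can grow only `cx ψ` times,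
so the chain has two consecutive worlds forcing the same ones; the later one is reflexive. -/
theorem exists_rel_isReflexiveFor {ψ : MF} {n : ℕ} {w : M.W}
    (hw : M.Forces (dian n top) w) (hn : ψ.cx < (M.boxTheory ψ w).card + n) :
    ∃ x, M.R w x ∧ M.IsReflexiveFor ψ x := by
  induction n generalizing w with
  | zero =>
    exact absurd hn (not_lt.2 (card_boxTheory_le ψ w))
  | succ n ih =>
    obtain ⟨u, hwu, hu⟩ := forces_dian_succ.1 hw
    by_cases heq : M.boxTheory ψ u = M.boxTheory ψ w
    · refine ⟨u, hwu, fun D hD hDu => ?_⟩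
      have hDw := (mem_boxTheory.1 (heq ▸ mem_boxTheory.2 ⟨hD, hDu⟩)).2
      exact hDw u hwu
    · have hlt := Finset.card_lt_card ((boxTheory_mono hwu).ssubset_of_ne (Ne.symm heq))
      obtain ⟨x, hux, hx⟩ := ih hu (by omega)
      exact ⟨x, M.trans hwu hux, hx⟩

theorem exists_forces_box_dian {A : MF} {w : M.W} (hbox : M.Forces (box A) w)
    (hdepth : M.Forces (dian (A.cx + 1) top) w) (m : ℕ) :
    ∃ (N : GLModel) (w' : N.W), N.Forces (box A) w' ∧ N.Forces (dian m top) w' := by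
  have hcard : 0 < (M.boxTheory (box A) w).card :=
    Finset.card_pos.2 ⟨_, mem_boxTheory.2 ⟨mem_subF_self _, hbox⟩⟩
  obtain ⟨x0, hwx0, hx0⟩ :=
    exists_rel_isReflexiveFor (ψ := box A) hdepth (by rw [cx_box]; omega)
  exact ⟨M.clone x0 m, .inl w, (clone_forces_iff hx0 _ (mem_subF_self _) _).1 hbox,
    clone_forces_dian_of_rel hwx0⟩

variable {M₁ M₂ : GLModel} {x₁ : M₁.W} {x₂ : M₂.W}

def joinRel (M₁ M₂ : GLModel) (x₁ : M₁.W) (x₂ : M₂.W) :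
    Option (M₁.W ⊕ M₂.W) → Option (M₁.W ⊕ M₂.W) → Prop
  | none, some (.inl y) => y = x₁ ∨ M₁.R x₁ y
  | none, some (.inr y) => y = x₂ ∨ M₂.R x₂ y
  | some (.inl x), some (.inl y) => M₁.R x y
  | some (.inr x), some (.inr y) => M₂.R x y
  | _, _ => False

/-- A new root `none` below the generated submodels of `M₁` at `x₁` and of `M₂` at `x₂`. -/
def join (M₁ M₂ : GLModel) (x₁ : M₁.W) (x₂ : M₂.W) : GLModel where
  W := Option (M₁.W ⊕ M₂.W)
  R := joinRel M₁ M₂ x₁ x₂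
  V n w := w.elim False (Sum.elim (M₁.V n) (M₂.V n))
  finite := inferInstance
  trans := by
    rintro (_ | x | x) (_ | y | y) (_ | z | z) h1 h2 <;> simp only [joinRel] at h1 h2 ⊢
    · exact h1.elim (· ▸ Or.inr h2) fun h1 => Or.inr (M₁.trans h1 h2)
    · exact h1.elim (· ▸ Or.inr h2) fun h1 => Or.inr (M₂.trans h1 h2)
    · exact M₁.trans h1 h2
    · exact M₂.trans h1 h2
  irrefl := by
    rintro (_ | x | x) h
    · exact h
    · exact M₁.irrefl x h
    · exact M₂.irrefl x h

theorem join_forces_inl_iff (C : MF) (x : M₁.W) :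
    (join M₁ M₂ x₁ x₂).Forces C (some (.inl x)) ↔ M₁.Forces C x := by
  refine forces_apply_iff (M := M₁) (N := join M₁ M₂ x₁ x₂) (some ∘ .inl) C (fun _ _ => Iff.rfl)
    ?_ (fun _ _ h => Or.inl h) C (mem_subF_self C) x
  rintro x (_ | y | y) h
  · exact h.elim
  · exact ⟨y, h, rfl⟩
  · exact h.elim

theorem join_forces_inr_iff (C : MF) (x : M₂.W) :
    (join M₁ M₂ x₁ x₂).Forces C (some (.inr x)) ↔ M₂.Forces C x := by
  refine forces_apply_iff (M := M₂) (N := join M₁ M₂ x₁ x₂) (some ∘ .inr) C (fun _ _ => Iff.rfl)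
    ?_ (fun _ _ h => Or.inl h) C (mem_subF_self C) x
  rintro x (_ | y | y) h
  · exact h.elim
  · exact h.elim
  · exact ⟨y, h, rfl⟩

end GLModel

theorem GLomegaPrv.exists_forces {B : MF} (h : GLomegaPrv B) :
    ∃ m, ∀ (M : GLModel) (w : M.W), M.Forces (dian m top) w → M.Forces B w := by
  induction h with
  | gl h => exact ⟨0, fun _ w _ => GLModel.forces_of_glPrv h w⟩
  | ax s hA =>
    obtain ⟨n, rfl⟩ := hA
    exact ⟨n, fun _ _ hw => by rwa [subst_dian_top]⟩
  | mp _ _ ih₁ ih₂ =>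
    obtain ⟨m₁, h₁⟩ := ih₁
    obtain ⟨m₂, h₂⟩ := ih₂
    exact ⟨max m₁ m₂, fun M w hw => h₁ M w (hw.dian_of_le (le_max_left _ _))
      (h₂ M w (hw.dian_of_le (le_max_right _ _)))⟩

open GLModel in
/-- A root below a world refuting `A` under `□A` and a world forcing `□A` of depth `m`
forces `◇ᵐ⊤ ∧ □□A ∧ ¬□A`. -/
theorem not_glomegaPrv_box_box_imp_box {A : MF} (hA : ¬ GLPrv A)
    (hdA : ¬ GLPrv (imp (dian (A.cx + 1) top) (neg (box A)))) :
    ¬ GLomegaPrv (imp (box (box A)) (box A)) := by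
  intro h
  obtain ⟨m, hm⟩ := h.exists_forces
  obtain ⟨M₁, x₁, hx₁⟩ := exists_not_forces (mt GLPrv.of_box_imp hA)
  obtain ⟨hbox₁, hA₁⟩ := Classical.not_imp.1 hx₁
  obtain ⟨M, w, hw⟩ := exists_not_forces hdA
  obtain ⟨hdepth, hbox⟩ := Classical.not_imp.1 hw
  obtain ⟨M₂, x₂, hbox₂, hdepth₂⟩ := exists_forces_box_dian (not_not.1 hbox) hdepth m
  set J := join M₁ M₂ x₁ x₂
  have hroot_depth : J.Forces (dian (m + 1) top) none :=
    forces_dian_succ.2 ⟨some (.inr x₂), Or.inl rfl, (join_forces_inr_iff _ _).2 hdepth₂⟩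
  have hroot_box_box : J.Forces (box (box A)) none := by
    rintro (_ | y | y) hy
    · exact hy.elim
    · exact (join_forces_inl_iff _ _).2 (hy.elim (· ▸ hbox₁) hbox₁.box_of_rel)
    · exact (join_forces_inr_iff _ _).2 (hy.elim (· ▸ hbox₂) hbox₂.box_of_rel)
  exact hA₁ ((join_forces_inl_iff A x₁).1
    (hm J none (hroot_depth.dian_of_le m.le_succ) hroot_box_box _ (Or.inl rfl)))

namespace PASetup.Facts

variable {S : PASetup}

theorem paPrv_pr_imp_pr (hS : S.Facts) {X Y : S.Sent} (h : S.PAPrv (S.imp X Y)) :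
    S.PAPrv (S.imp (S.pr X) (S.pr Y)) :=
  hS.pa_mp _ _ (hS.d2 X Y) (hS.d1 _ (hS.pa_t _ h))

theorem trueN_of_paPrv_imp (hS : S.Facts) {X Y : S.Sent} (h : S.PAPrv (S.imp X Y))
    (hX : S.TrueN X) : S.TrueN Y :=
  (hS.true_imp X Y).1 (hS.pa_sound _ h) hX

theorem trueN_conIter_succ (hS : S.Facts) {k : ℕ} (h : ¬ S.TPrv (S.neg (S.conIter k))) :
    S.TrueN (S.conIter (k + 1)) :=
  (hS.true_imp _ _).2 fun hpr => absurd ((hS.true_pr _).1 hpr) h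

theorem paPrv_conIter_imp_dian (hS : S.Facts) (g : ℕ → S.Sent) :
    ∀ n, S.PAPrv (S.imp (S.conIter n) (S.minterp g (dian n top)))
  | 0 => hS.isClassical.of_taut fun v hv => by
    simp only [conIter, dian, boxn, MF.neg, top, minterp, PASetup.neg, hv.1, hv.2]
    tauto
  | n + 1 => by
    have hcontra : S.PAPrv (S.imp (S.minterp g (boxn n (MF.neg top))) (S.neg (S.conIter n))) :=
      hS.pa_mp _ _ (hS.isClassical.of_taut fun v hv => by
        simp only [dian, MF.neg, minterp, PASetup.neg, hv.1, hv.2]; tauto)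
        (paPrv_conIter_imp_dian hS g n)
    exact hS.pa_mp _ _ (hS.isClassical.of_taut fun v hv => by
      simp only [conIter, dian, boxn, MF.neg, minterp, PASetup.neg, hv.1, hv.2]; tauto)
      (hS.paPrv_pr_imp_pr hcontra)

theorem not_glPrv_of_paPrv_imp_box_imp_pr_fal (hS : S.Facts)
    (glsound : ∀ (B : MF) (g : ℕ → S.Sent), GLPrv B → S.PAPrv (S.minterp g B))
    {A : MF} {g : ℕ → S.Sent} {X : S.Sent} (hX : S.TrueN X)
    (hg : S.PAPrv (S.imp X (S.imp (S.minterp g (box A)) (S.pr S.fal)))) : ¬ GLPrv A := by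
  intro hA
  have hboxA : S.PAPrv (S.minterp g (box A)) := hS.d1 _ (hS.pa_t _ (glsound A g hA))
  have hX_pr_fal : S.PAPrv (S.imp X (S.pr S.fal)) :=
    hS.pa_mp _ _ (hS.pa_mp _ _ (hS.isClassical.of_taut fun v hv => by simp only [hv.1]; tauto)
      hg) hboxA
  exact hS.t_con ((hS.true_pr _).1 (hS.trueN_of_paPrv_imp hX_pr_fal hX))

theorem not_glPrv_dian_imp_neg_box (hS : S.Facts)
    (glsound : ∀ (B : MF) (g : ℕ → S.Sent), GLPrv B → S.PAPrv (S.minterp g B))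
    {A : MF} {g : ℕ → S.Sent} {k : ℕ} (hcon : S.TrueN (S.conIter k))
    (hg : S.PAPrv (S.minterp g (box A))) : ¬ GLPrv (MF.imp (dian k top) (MF.neg (box A))) := by
  intro h
  have hincon : S.PAPrv (S.neg (S.conIter k)) :=
    hS.pa_mp _ _ (hS.pa_mp _ _ (hS.pa_mp _ _ (hS.isClassical.of_taut fun v hv => by
      simp only [MF.neg, minterp, PASetup.neg, hv.1, hv.2]; tauto)
      (glsound _ g h)) (hS.paPrv_conIter_imp_dian g k)) hg
  exact hS.true_fal (hS.trueN_of_paPrv_imp hincon hcon)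

end PASetup.Facts

/-- assuming arithmetical soundness of GL: if the height of `T`
exceeds `cx A` (i.e. `T ⊬ ¬Con_T^k` for all `k ≤ cx A`) and for every Σ₁
sentence `σ` there is an arithmetical interpretation `f` with
`PA ⊢ σ → f_T(□A)` and `PA + Con_T^{cx A + 1} ⊢ f_T(□A) → σ`, then `A` is
nontrifling, i.e. `GL_ω ⊬ □□A → □A`. -/
theorem nontrifling_of_fgh (S : PASetup) (hS : S.Facts)
    (glsound : ∀ (B : MF) (g : ℕ → S.Sent), GLPrv B → S.PAPrv (S.minterp g B))
    (A : MF)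
    (height : ∀ k, k ≤ MF.cx A → ¬ S.TPrv (S.neg (S.conIter k)))
    (h : ∀ σ, S.Sigma1 σ → ∃ g : ℕ → S.Sent,
      S.PAPrv (S.imp σ (S.minterp g (MF.box A))) ∧
      S.PAPrv (S.imp (S.conIter (MF.cx A + 1))
        (S.imp (S.minterp g (MF.box A)) σ))) :
    ¬ GLomegaPrv (MF.imp (MF.box (MF.box A)) (MF.box A)) := by
  have hcon : S.TrueN (S.conIter (A.cx + 1)) := hS.trueN_conIter_succ (height _ le_rfl)
  refine not_glomegaPrv_box_box_imp_box ?_ ?_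
  · obtain ⟨g, -, hg⟩ := h _ (hS.sigma1_pr S.fal)
    exact hS.not_glPrv_of_paPrv_imp_box_imp_pr_fal glsound hcon hg
  · obtain ⟨g, hg, -⟩ := h _ hS.sigma1_top
    have htop : S.PAPrv (S.neg S.fal) := hS.isClassical.of_taut fun v hv => by
      simp only [PASetup.neg, hv.1, hv.2]; tauto
    exact hS.not_glPrv_dian_imp_neg_box glsound hcon (hS.pa_mp _ _ hg htop)
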